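/- Assume SSN_ℓ ~ (sqrt(2·e^{5/8})/4)·ℓ^{-1}·(8/e²)^ℓ·ℓ^{2ℓ} and SN_ℓ ~ (sqrt(2·e^{1/2})/4)·ℓ^{-1}·(8/e²)^ℓ·ℓ^{2ℓ} as ℓ → ∞. Then ∑_{j=1}^n C(n,j)·SN_j / ∑_{j=1}^n C(n,j)·SSN_j → e^{-1/16} as n → ∞. -/

import Mathlib

/-!
With `g ℓ = ℓ⁻¹ r^ℓ ℓ^{2ℓ}` (here `r = 8/e²`), the bounds `C(j+k, j) ≤ (j+k)^k` and
`j^{2j-1} ≤ (j+k)^{2j-1}` give `C(n, j) g j ≤ (r n)^{-(n-j)} g n`, so the terms `j < n` of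
`∑ C(n, j) g j` add up to `O(g n / n)`. Hence, whenever `b ℓ ~ c g ℓ`, the top term dominates:
`∑ C(n, j) b j ~ c g n`. The ratio of the two binomial sums therefore tends to the ratio of the
constants, `√(e^{1/2} / e^{5/8}) = e^{-1/16}`.
-/

open Filter Real Finset

theorem tendsto_sum_choose_mul_div_of_tendsto_div {g b : ℕ → ℝ} {c : ℝ}
    (hg : ∀ ℓ, 1 ≤ ℓ → 0 < g ℓ)
    (hlower : Tendsto (fun n : ℕ => (∑ j ∈ Ico 1 n, (n.choose j : ℝ) * g j) / g n)
      atTop (nhds 0))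
    (hb : Tendsto (fun ℓ => b ℓ / g ℓ) atTop (nhds c)) :
    Tendsto (fun n : ℕ => (∑ j ∈ Icc 1 n, (n.choose j : ℝ) * b j) / g n) atTop (nhds c) := by
  obtain ⟨M, hM⟩ := hb.abs.bddAbove_range
  have hbM : ∀ j, 1 ≤ j → |b j| ≤ M * g j := fun j hj => by
    have : |b j / g j| ≤ M := hM ⟨j, rfl⟩
    rwa [abs_div, abs_of_pos (hg j hj), div_le_iff₀ (hg j hj)] at this
  have hrest : Tendsto (fun n : ℕ => (∑ j ∈ Ico 1 n, (n.choose j : ℝ) * b j) / g n)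
      atTop (nhds 0) := by
    refine squeeze_zero_norm' ?_ (by simpa using hlower.const_mul M)
    filter_upwards [eventually_ge_atTop 1] with n hn
    rw [norm_div, Real.norm_of_nonneg (hg n hn).le, mul_div_assoc',
      div_le_div_iff_of_pos_right (hg n hn), mul_sum]
    refine (norm_sum_le _ _).trans (sum_le_sum fun j hj => ?_)
    rw [norm_mul, Real.norm_natCast, Real.norm_eq_abs, mul_left_comm]
    exact mul_le_mul_of_nonneg_left (hbM j (mem_Ico.mp hj).1) (Nat.cast_nonneg _)
  have hsplit := hrest.add hb
  rw [zero_add] at hsplit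
  refine hsplit.congr' ?_
  filter_upwards [eventually_ge_atTop 1] with n hn
  rw [← Ico_insert_right hn, sum_insert (by simp), Nat.choose_self, Nat.cast_one, one_mul,
    add_div, add_comm]

noncomputable def growthScale (r : ℝ) (ℓ : ℕ) : ℝ :=
  (ℓ : ℝ)⁻¹ * r ^ ℓ * (ℓ : ℝ) ^ (2 * ℓ)

section GrowthScale

variable {r : ℝ}

lemma growthScale_nonneg (hr : 0 ≤ r) (ℓ : ℕ) : 0 ≤ growthScale r ℓ := by
  unfold growthScale; positivity

lemma growthScale_pos (hr : 0 < r) {ℓ : ℕ} (hℓ : 1 ≤ ℓ) : 0 < growthScale r ℓ := by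
  have : (0 : ℝ) < ℓ := by exact_mod_cast hℓ
  unfold growthScale; positivity

lemma growthScale_eq_pow_mul_pow (r : ℝ) {ℓ : ℕ} (hℓ : 1 ≤ ℓ) :
    growthScale r ℓ = r ^ ℓ * (ℓ : ℝ) ^ (2 * ℓ - 1) := by
  have : (ℓ : ℝ) ≠ 0 := by positivity
  rw [growthScale, ← pow_sub_one_mul (by omega : 2 * ℓ ≠ 0)]
  field_simp

lemma choose_mul_growthScale_le (hr : 0 < r) {j : ℕ} (hj : 1 ≤ j) (k : ℕ) :
    ((j + k).choose j : ℝ) * growthScale r j ≤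
      growthScale r (j + k) / (r * (j + k : ℕ)) ^ k := by
  have hN : (0 : ℝ) < (j + k : ℕ) := by positivity
  have hchoose : ((j + k).choose j : ℝ) ≤ ((j + k : ℕ) : ℝ) ^ k := by
    rw [Nat.choose_symm_add]; exact_mod_cast Nat.choose_le_pow _ _
  have hscale : growthScale r (j + k) / (r * (j + k : ℕ)) ^ k =
      ((j + k : ℕ) : ℝ) ^ k * (r ^ j * ((j + k : ℕ) : ℝ) ^ (2 * j - 1)) := by
    rw [growthScale_eq_pow_mul_pow r (by omega), div_eq_iff (by positivity),
      show 2 * (j + k) - 1 = 2 * j - 1 + k + k by omega]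
    ring
  rw [hscale, growthScale_eq_pow_mul_pow r hj]
  gcongr
  exact_mod_cast Nat.le_add_right j k

lemma sum_choose_mul_growthScale_le (hr : 0 < r) {n : ℕ} (hn : 2 ≤ r * n) :
    ∑ j ∈ Ico 1 n, (n.choose j : ℝ) * growthScale r j ≤ 2 / (r * n) * growthScale r n := by
  set x := 1 / (r * n) with hx
  have hx0 : 0 ≤ x := by positivity
  have hx2 : x ≤ 1 / 2 := by rw [hx]; gcongr
  calc ∑ j ∈ Ico 1 n, (n.choose j : ℝ) * growthScale r j
      ≤ ∑ j ∈ Ico 1 n, x ^ (n - j) * growthScale r n := by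
        refine sum_le_sum fun j hj => ?_
        obtain ⟨hj1, hjn⟩ := mem_Ico.mp hj
        have := choose_mul_growthScale_le hr hj1 (n - j)
        rwa [Nat.add_sub_cancel' hjn.le, div_eq_inv_mul, ← inv_pow, ← one_div] at this
    _ = (∑ k ∈ Ico 1 n, x ^ k) * growthScale r n := by
        rw [← sum_mul, sum_Ico_reflect (fun k => x ^ k) 1 (Nat.le_succ n)]
        simp
    _ ≤ x / (1 - x) * growthScale r n := by
        gcongr
        · exact growthScale_nonneg hr.le n
        · simpa using geom_sum_Ico_le_of_lt_one hx0 (by linarith) (m := 1) (n := n)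
    _ ≤ 2 * x * growthScale r n := by
        gcongr
        · exact growthScale_nonneg hr.le n
        · rw [div_le_iff₀ (by linarith)]; nlinarith
    _ = 2 / (r * n) * growthScale r n := by rw [hx]; ring

lemma tendsto_sum_choose_mul_growthScale_div (hr : 0 < r) :
    Tendsto (fun n : ℕ => (∑ j ∈ Ico 1 n, (n.choose j : ℝ) * growthScale r j) /
      growthScale r n) atTop (nhds 0) := by
  have hlim : Tendsto (fun n : ℕ => 2 / r / n) atTop (nhds 0) :=
    tendsto_const_div_atTop_nhds_zero_nat _
  refine squeeze_zero' (Eventually.of_forall fun n => ?_) ?_ hlim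
  · exact div_nonneg (sum_nonneg fun j _ => mul_nonneg (Nat.cast_nonneg _)
      (growthScale_nonneg hr.le j)) (growthScale_nonneg hr.le n)
  · filter_upwards [eventually_ge_atTop 1,
      (tendsto_natCast_atTop_atTop.const_mul_atTop hr).eventually_ge_atTop 2] with n hn hrn
    rw [div_le_iff₀ (growthScale_pos hr hn), div_div]
    exact sum_choose_mul_growthScale_le hr hrn

lemma tendsto_div_growthScale {b : ℕ → ℝ} {c : ℝ} (hc : c ≠ 0)
    (h : Tendsto (fun ℓ : ℕ => b ℓ / (c * (ℓ : ℝ)⁻¹ * r ^ ℓ * (ℓ : ℝ) ^ (2 * ℓ))) atTop (nhds 1)) :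
    Tendsto (fun ℓ => b ℓ / growthScale r ℓ) atTop (nhds c) := by
  convert h.const_mul c using 2 with ℓ
  · rw [show c * (ℓ : ℝ)⁻¹ * r ^ ℓ * (ℓ : ℝ) ^ (2 * ℓ) = c * growthScale r ℓ by
      rw [growthScale]; ring, mul_div_assoc', mul_div_mul_left _ _ hc]
  · simp

end GrowthScale

lemma sqrt_two_mul_exp_div_sqrt_two_mul_exp :
    sqrt (2 * exp (1 / 2)) / 4 / (sqrt (2 * exp (5 / 8)) / 4) = exp (-(1 / 16)) := by
  rw [div_div_div_cancel_right₀ (by norm_num), ← sqrt_div (by positivity),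
    mul_div_mul_left _ _ two_ne_zero, ← exp_sub, ← exp_half]
  norm_num

theorem simplicial_over_semisimplicial_limit (SSN SN : ℕ → ℝ)
    (hSSN : Tendsto (fun ℓ : ℕ => SSN ℓ /
        (Real.sqrt (2 * Real.exp (5/8)) / 4 * (ℓ : ℝ)⁻¹ *
          (8 / Real.exp 1 ^ 2) ^ ℓ * (ℓ : ℝ) ^ (2 * ℓ))) atTop (nhds 1))
    (hSN : Tendsto (fun ℓ : ℕ => SN ℓ /
        (Real.sqrt (2 * Real.exp (1/2)) / 4 * (ℓ : ℝ)⁻¹ *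
          (8 / Real.exp 1 ^ 2) ^ ℓ * (ℓ : ℝ) ^ (2 * ℓ))) atTop (nhds 1)) :
    Tendsto (fun n : ℕ =>
        (∑ j ∈ Finset.Icc 1 n, (n.choose j : ℝ) * SN j) /
        (∑ j ∈ Finset.Icc 1 n, (n.choose j : ℝ) * SSN j))
      atTop (nhds (Real.exp (-(1/16)))) := by
  have hr : 0 < 8 / exp 1 ^ 2 := by positivity
  have hc (a : ℝ) : sqrt (2 * exp a) / 4 ≠ 0 := by positivity
  have hSSN' := tendsto_sum_choose_mul_div_of_tendsto_div (fun _ => growthScale_pos hr)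
    (tendsto_sum_choose_mul_growthScale_div hr) (tendsto_div_growthScale (hc _) hSSN)
  have hSN' := tendsto_sum_choose_mul_div_of_tendsto_div (fun _ => growthScale_pos hr)
    (tendsto_sum_choose_mul_growthScale_div hr) (tendsto_div_growthScale (hc _) hSN)
  rw [← sqrt_two_mul_exp_div_sqrt_two_mul_exp]
  refine (hSN'.div hSSN' (hc _)).congr' ?_
  filter_upwards [eventually_ge_atTop 1] with n hn
  exact div_div_div_cancel_right₀ (growthScale_pos hr hn).ne' _ _
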